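/- For the linear accommodation controller with negative feedback (K_a < 0, with sign chosen so feedback opposes contact force), and the stiffness contact model, if the closed-loop force sequence converges to a limit F, then F = -(1-γ)Δx_r/(γ K_a); in particular the steady-state contact force is finite and proportional to the reference velocity Δx_r. -/

import Mathlib

/-!
The discounted sum `D k = ∑_{i<k} γ^(k-i) K_a f i` obeys `D (k+1) = γ (D k + K_a f k)`, so if
`f → F` and `D → S` then `S = γ (S + K_a F)`. The stiffness model turns the update rule into
`f (k+1) - f k = -K_s (Δxr + D (k+1))`; the increments of a convergent sequence tend to `0`,
hence `D → -Δxr`, and solving `-Δxr = γ (-Δxr + K_a F)` gives `F`.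
-/

open Filter Topology Finset

def discountedSum {R : Type*} [CommSemiring R] (γ : R) (u : ℕ → R) (k : ℕ) : R :=
  ∑ i ∈ range k, γ ^ (k - i) * u i

section DiscountedSum

variable {R : Type*} [CommSemiring R]

theorem discountedSum_succ (γ : R) (u : ℕ → R) (k : ℕ) :
    discountedSum γ u (k + 1) = γ * (discountedSum γ u k + u k) := by
  simp only [discountedSum, sum_range_succ, add_tsub_cancel_left, pow_one, mul_add, mul_sum]
  congr 1
  refine sum_congr rfl fun i hi => ?_
  rw [Nat.sub_add_comm (mem_range.mp hi).le, pow_succ]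
  ring

theorem eq_mul_add_of_tendsto_discountedSum [TopologicalSpace R] [IsTopologicalSemiring R]
    [T2Space R] {γ L S : R} {u : ℕ → R} (hu : Tendsto u atTop (𝓝 L))
    (hS : Tendsto (discountedSum γ u) atTop (𝓝 S)) :
    S = γ * (S + L) := by
  have hshift : Tendsto (fun k => discountedSum γ u (k + 1)) atTop (𝓝 S) :=
    hS.comp (tendsto_add_atTop_nat 1)
  simp only [discountedSum_succ] at hshift
  exact tendsto_nhds_unique hshift ((hS.add hu).const_mul γ)

end DiscountedSum

theorem steady_state_force
    (K_s K_a γ Δxr x F : ℝ) (x_c f : ℕ → ℝ)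
    (hγ : γ ∈ Set.Ioo (0:ℝ) 1)
    (hKa : K_a < 0)
    (hKs : 0 < K_s)
    (hstiff : ∀ k, f k = K_s * (x - x_c k))
    (hupdate : ∀ k ≥ 1, x_c k = x_c (k-1) + Δxr + ∑ i ∈ Finset.range k, γ^(k-i) * (K_a * f i))
    (hconv : Tendsto f atTop (nhds F)) :
    F = -(1 - γ) * Δxr / (γ * K_a) := by
  set D := discountedSum γ (fun i => K_a * f i)
  have hincrement : ∀ k, D (k + 1) = (f k - f (k + 1)) / K_s - Δxr := fun k => by
    have hxc : x_c (k + 1) = x_c k + Δxr + D (k + 1) := hupdate (k + 1) k.succ_pos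
    rw [hstiff k, hstiff (k + 1), hxc]
    field_simp
    ring
  have hD : Tendsto D atTop (𝓝 (-Δxr)) := by
    rw [← tendsto_add_atTop_iff_nat 1, funext hincrement]
    have hf := ((hconv.sub (hconv.comp (tendsto_add_atTop_nat 1))).div_const K_s).sub_const Δxr
    simpa only [Function.comp_apply, sub_self, zero_div, zero_sub] using hf
  have hfix := eq_mul_add_of_tendsto_discountedSum (hconv.const_mul K_a) hD
  rw [eq_div_iff (mul_ne_zero hγ.1.ne' hKa.ne)]
  linarith
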